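/- Let (T_n) be a sequence of bounded operators from H to K, each (M,N,λ_n)-complementable with blocks [[A_n,B_n],[C_n,D_n]], converging in operator norm to T = [[A,B],[C,D]] where R(D) is closed. If the sequence (λ_n) is bounded with supremum λ, then T is (M,N,λ)-complementable, i.e., C(B_M) ⊆ λ D(B_{M⊥}) and B*(B_N) ⊆ λ D*(B_{N⊥}). -/

import Mathlib

open ContinuousLinearMap Filter

section AuxLemmas

local notation "⟪" x ", " y "⟫" => @inner ℂ _ _ x y

variable {E F : Type*} [NormedAddCommGroup E] [InnerProductSpace ℂ E] [CompleteSpace E]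
  [NormedAddCommGroup F] [InnerProductSpace ℂ F] [CompleteSpace F]

/-- For a closed-range operator `D`, a limit of `D uₙ` with `‖uₙ‖ ≤ 1` lies in `D(B)`. -/
lemma ballLimit (D : E →L[ℂ] F) (hclosed : IsClosed (Set.range D))
    (u : ℕ → E) (hu : ∀ n, ‖u n‖ ≤ 1) (w : F)
    (hw : Tendsto (fun n => D (u n)) atTop (nhds w)) :
    ∃ v : E, ‖v‖ ≤ 1 ∧ D v = w := by
  haveI : CompleteSpace (LinearMap.ker (D : E →ₗ[ℂ] F)) := by
    exact (ContinuousLinearMap.isClosed_ker D).completeSpace_coe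
  set K0 : Submodule ℂ E := (LinearMap.ker (D : E →ₗ[ℂ] F))ᗮ with hK0def
  haveI : CompleteSpace K0 := (Submodule.isClosed_orthogonal _).completeSpace_coe
  have hrange : (LinearMap.range (D : E →ₗ[ℂ] F) : Set F) = Set.range D := by
    ext z; simp [LinearMap.mem_range, eq_comm]
  haveI : CompleteSpace (LinearMap.range (D : E →ₗ[ℂ] F)) :=
    (show IsClosed (LinearMap.range (D : E →ₗ[ℂ] F) : Set F) by rw [hrange]; exact hclosed).completeSpace_coe
  set E0 : K0 →L[ℂ] (LinearMap.range (D : E →ₗ[ℂ] F)) :=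
    (D.comp K0.subtypeL).codRestrict _ (fun x => LinearMap.mem_range_self _ _) with hE0def
  have hE0apply : ∀ x : K0, ((E0 x : F)) = D (x : E) := fun x => rfl
  have hker : LinearMap.ker (E0 : K0 →ₗ[ℂ] LinearMap.range (D : E →ₗ[ℂ] F)) = ⊥ := by
    rw [LinearMap.ker_eq_bot']
    intro x hx
    have hx' : (x : E) ∈ LinearMap.ker (D : E →ₗ[ℂ] F) := by
      have h := congrArg Subtype.val hx
      rw [ContinuousLinearMap.coe_coe, hE0apply] at h
      simpa [LinearMap.mem_ker] using h
    have h0 : ⟪(x : E), (x : E)⟫ = 0 :=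
      Submodule.inner_right_of_mem_orthogonal hx' x.2
    exact Subtype.ext (inner_self_eq_zero.mp h0)
  have hDproj : ∀ v : E, D ((Submodule.orthogonalProjection K0 v : E)) = D v := by
    intro v
    have hmem : v - (Submodule.orthogonalProjection K0 v : E) ∈ LinearMap.ker (D : E →ₗ[ℂ] F) := by
      have h1 : v - (Submodule.orthogonalProjection K0 v : E) ∈ ((LinearMap.ker (D : E →ₗ[ℂ] F))ᗮ)ᗮ :=
        Submodule.sub_starProjection_mem_orthogonal (K := K0) v
      rwa [Submodule.orthogonal_orthogonal] at h1
    have h2 : D v - D (Submodule.orthogonalProjection K0 v : E) = 0 := by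
      rw [← map_sub]; exact LinearMap.mem_ker.mp hmem
    exact (sub_eq_zero.mp h2).symm
  have hsurj : LinearMap.range (E0 : K0 →ₗ[ℂ] LinearMap.range (D : E →ₗ[ℂ] F)) = ⊤ := by
    rw [LinearMap.range_eq_top]
    rintro ⟨z, hz⟩
    obtain ⟨v, rfl⟩ := LinearMap.mem_range.mp hz
    exact ⟨Submodule.orthogonalProjection K0 v, Subtype.ext (by rw [ContinuousLinearMap.coe_coe, hE0apply, hDproj]; rfl)⟩
  set e := ContinuousLinearEquiv.ofBijective E0 hker hsurj with hedef
  have he : ∀ y : K0, e y = E0 y := fun y =>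
    congrFun (ContinuousLinearEquiv.coeFn_ofBijective E0 hker hsurj) y
  have hwmem : w ∈ LinearMap.range (D : E →ₗ[ℂ] F) := by
    rw [← SetLike.mem_coe, hrange]
    exact hclosed.mem_of_tendsto hw (Eventually.of_forall fun n => Set.mem_range_self _)
  set v : K0 := e.symm ⟨w, hwmem⟩ with hvdef
  have hDv : D (v : E) = w := by
    have h := congrArg Subtype.val (e.apply_symm_apply ⟨w, hwmem⟩)
    rwa [he v, hE0apply] at h
  have hpn : ∀ n, (Submodule.orthogonalProjection K0 (u n)) =
      e.symm ⟨D (u n), LinearMap.mem_range_self _ _⟩ := by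
    intro n
    have h : e (Submodule.orthogonalProjection K0 (u n)) = ⟨D (u n), LinearMap.mem_range_self _ _⟩ := by
      rw [he]; exact Subtype.ext (by rw [hE0apply, hDproj])
    rw [← h, e.symm_apply_apply]
  have htend : Tendsto (fun n => (⟨D (u n), LinearMap.mem_range_self _ _⟩ :
      LinearMap.range (D : E →ₗ[ℂ] F))) atTop (nhds ⟨w, hwmem⟩) := by
    rw [tendsto_subtype_rng]
    exact hw
  have hvt : Tendsto (fun n => (Submodule.orthogonalProjection K0 (u n))) atTop (nhds v) := by
    simp only [hpn]
    exact (e.symm.continuous.tendsto _).comp htend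
  have hnorm : ‖v‖ ≤ 1 := by
    refine le_of_tendsto hvt.norm (Eventually.of_forall fun n => ?_)
    calc ‖Submodule.orthogonalProjection K0 (u n)‖ ≤ ‖Submodule.orthogonalProjection K0‖ * ‖u n‖ := le_opNorm _ _
      _ ≤ 1 * 1 := mul_le_mul (Submodule.orthogonalProjection_norm_le _) (hu n) (norm_nonneg _) zero_le_one
      _ = 1 := one_mul 1
  exact ⟨v, hnorm, hDv⟩

/-- If `D` has closed range, so does its adjoint. -/
lemma adjointRangeClosed (D : E →L[ℂ] F) (hclosed : IsClosed (Set.range D)) :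
    IsClosed (Set.range (adjoint D)) := by
  haveI : CompleteSpace (LinearMap.ker (D : E →ₗ[ℂ] F)) := by
    exact (ContinuousLinearMap.isClosed_ker D).completeSpace_coe
  set K0 : Submodule ℂ E := (LinearMap.ker (D : E →ₗ[ℂ] F))ᗮ with hK0def
  haveI : CompleteSpace K0 := (Submodule.isClosed_orthogonal _).completeSpace_coe
  have hrange : (LinearMap.range (D : E →ₗ[ℂ] F) : Set F) = Set.range D := by
    ext z; simp [LinearMap.mem_range, eq_comm]
  haveI : CompleteSpace (LinearMap.range (D : E →ₗ[ℂ] F)) :=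
    (show IsClosed (LinearMap.range (D : E →ₗ[ℂ] F) : Set F) by rw [hrange]; exact hclosed).completeSpace_coe
  set E0 : K0 →L[ℂ] (LinearMap.range (D : E →ₗ[ℂ] F)) :=
    (D.comp K0.subtypeL).codRestrict _ (fun x => LinearMap.mem_range_self _ _) with hE0def
  have hE0apply : ∀ x : K0, ((E0 x : F)) = D (x : E) := fun x => rfl
  have hker : LinearMap.ker (E0 : K0 →ₗ[ℂ] LinearMap.range (D : E →ₗ[ℂ] F)) = ⊥ := by
    rw [LinearMap.ker_eq_bot']
    intro x hx
    have hx' : (x : E) ∈ LinearMap.ker (D : E →ₗ[ℂ] F) := by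
      have h := congrArg Subtype.val hx
      rw [ContinuousLinearMap.coe_coe, hE0apply] at h
      simpa [LinearMap.mem_ker] using h
    have h0 : ⟪(x : E), (x : E)⟫ = 0 :=
      Submodule.inner_right_of_mem_orthogonal hx' x.2
    exact Subtype.ext (inner_self_eq_zero.mp h0)
  have hDproj : ∀ v : E, D ((Submodule.orthogonalProjection K0 v : E)) = D v := by
    intro v
    have hmem : v - (Submodule.orthogonalProjection K0 v : E) ∈ LinearMap.ker (D : E →ₗ[ℂ] F) := by
      have h1 : v - (Submodule.orthogonalProjection K0 v : E) ∈ ((LinearMap.ker (D : E →ₗ[ℂ] F))ᗮ)ᗮ :=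
        Submodule.sub_starProjection_mem_orthogonal (K := K0) v
      rwa [Submodule.orthogonal_orthogonal] at h1
    have h2 : D v - D (Submodule.orthogonalProjection K0 v : E) = 0 := by
      rw [← map_sub]; exact LinearMap.mem_ker.mp hmem
    exact (sub_eq_zero.mp h2).symm
  have hsurj : LinearMap.range (E0 : K0 →ₗ[ℂ] LinearMap.range (D : E →ₗ[ℂ] F)) = ⊤ := by
    rw [LinearMap.range_eq_top]
    rintro ⟨z, hz⟩
    obtain ⟨v, rfl⟩ := LinearMap.mem_range.mp hz
    exact ⟨Submodule.orthogonalProjection K0 v, Subtype.ext (by rw [ContinuousLinearMap.coe_coe, hE0apply, hDproj]; rfl)⟩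
  set e := ContinuousLinearEquiv.ofBijective E0 hker hsurj with hedef
  have he : ∀ y : K0, e y = E0 y := fun y =>
    congrFun (ContinuousLinearEquiv.coeFn_ofBijective E0 hker hsurj) y
  suffices h : Set.range (adjoint D) = (K0 : Set E) by
    rw [h]; exact Submodule.isClosed_orthogonal _
  apply Set.Subset.antisymm
  · rintro _ ⟨z, rfl⟩
    rw [SetLike.mem_coe, hK0def, Submodule.mem_orthogonal]
    intro k hk
    rw [adjoint_inner_right, (show D k = 0 from LinearMap.mem_ker.mp hk), inner_zero_left]
  · intro x hx
    set x' : K0 := ⟨x, hx⟩ with hx'def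
    set A : (LinearMap.range (D : E →ₗ[ℂ] F)) →L[ℂ] K0 := (e.symm : (LinearMap.range (D : E →ₗ[ℂ] F)) →L[ℂ] K0) with hAdef
    refine ⟨((adjoint A x' : LinearMap.range (D : E →ₗ[ℂ] F)) : F), ?_⟩
    apply ext_inner_right ℂ
    intro v
    rw [adjoint_inner_left]
    have h1 : ⟪(adjoint A x' : LinearMap.range (D : E →ₗ[ℂ] F)), E0 (Submodule.orthogonalProjection K0 v)⟫ =
        ⟪((adjoint A x' : LinearMap.range (D : E →ₗ[ℂ] F)) : F), D v⟫ := by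
      rw [Submodule.coe_inner, hE0apply, hDproj]
    rw [← h1, adjoint_inner_left]
    have h2 : A (E0 (Submodule.orthogonalProjection K0 v)) = Submodule.orthogonalProjection K0 v := by
      rw [hAdef, ← he]
      exact e.symm_apply_apply _
    rw [h2, Submodule.coe_inner]
    have h3 : ⟪x, v - (Submodule.orthogonalProjection K0 v : E)⟫ = 0 :=
      Submodule.inner_right_of_mem_orthogonal hx
        (Submodule.sub_starProjection_mem_orthogonal (K := K0) v)
    rw [inner_sub_right] at h3
    exact (sub_eq_zero.mp h3).symm

/-- Convergence of the blocks. -/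
lemma tendsto_blk {H K : Type*} [NormedAddCommGroup H] [NormedSpace ℂ H]
    [NormedAddCommGroup K] [NormedSpace ℂ K]
    {V W : Type*} [NormedAddCommGroup V] [NormedSpace ℂ V]
    [NormedAddCommGroup W] [NormedSpace ℂ W]
    (P : K →L[ℂ] W) (ι : V →L[ℂ] H) {Tn : ℕ → H →L[ℂ] K} {T : H →L[ℂ] K}
    (hconv : Tendsto Tn atTop (nhds T)) :
    Tendsto (fun n => P.comp ((Tn n).comp ι)) atTop (nhds (P.comp (T.comp ι))) := by
  have hF : Continuous fun S : H →L[ℂ] K => P.comp (S.comp ι) :=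
    continuous_const.clm_comp (continuous_id.clm_comp continuous_const)
  exact (hF.tendsto T).comp hconv

/-- Pointwise convergence from norm convergence. -/
lemma tendsto_clm_apply {E F : Type*} [NormedAddCommGroup E] [NormedSpace ℂ E]
    [NormedAddCommGroup F] [NormedSpace ℂ F] {fn : ℕ → E →L[ℂ] F} {f : E →L[ℂ] F}
    (h : Tendsto fn atTop (nhds f)) (x : E) :
    Tendsto (fun n => fn n x) atTop (nhds (f x)) :=
  ((ContinuousLinearMap.apply ℂ F x).continuous.tendsto _).comp h

/-- The abstract limiting argument. -/
lemma keyLemma (D : E →L[ℂ] F) (hclosed : IsClosed (Set.range D))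
    (Dn : ℕ → E →L[ℂ] F) (hDconv : Tendsto Dn atTop (nhds D))
    (lam : ℕ → ℝ) (hpos : ∀ n, 0 < lam n) (hbdd : BddAbove (Set.range lam))
    (c : ℕ → F) (w : F) (hc : Tendsto c atTop (nhds w))
    (y : ℕ → E) (hy : ∀ n, ‖y n‖ ≤ 1)
    (hrel : ∀ n, c n = ((lam n : ℝ) : ℂ) • Dn n (y n)) :
    ∃ v : E, ‖v‖ ≤ 1 ∧ w = ((sSup (Set.range lam) : ℝ) : ℂ) • D v := by
  set l := sSup (Set.range lam) with hl
  have hlpos : (0 : ℝ) < l := lt_of_lt_of_le (hpos 0) (le_csSup hbdd ⟨0, rfl⟩)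
  have hlne : ((l : ℝ) : ℂ) ≠ 0 := by
    simpa using ne_of_gt hlpos
  have hle : ∀ n, lam n ≤ l := fun n => le_csSup hbdd ⟨n, rfl⟩
  set u : ℕ → E := fun n => ((lam n / l : ℝ) : ℂ) • y n with hu
  have hun : ∀ n, ‖u n‖ ≤ 1 := by
    intro n
    rw [hu]
    simp only [norm_smul]
    have h1 : ‖((lam n / l : ℝ) : ℂ)‖ ≤ 1 := by
      rw [Complex.norm_real, Real.norm_eq_abs,
        abs_of_nonneg (div_nonneg (hpos n).le hlpos.le)]
      exact div_le_one_of_le₀ (hle n) hlpos.le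
    calc ‖((lam n / l : ℝ) : ℂ)‖ * ‖y n‖ ≤ 1 * 1 :=
          mul_le_mul h1 (hy n) (norm_nonneg _) zero_le_one
      _ = 1 := one_mul 1
  have hdiff : ∀ n, D (u n) - ((l : ℝ) : ℂ)⁻¹ • c n =
      ((lam n / l : ℝ) : ℂ) • ((D - Dn n) (y n)) := by
    intro n
    rw [hrel n, hu]
    simp only [map_smul, smul_smul, sub_apply, smul_sub]
    congr 2
    push_cast
    field_simp
  have herr : Tendsto (fun n => D (u n) - ((l : ℝ) : ℂ)⁻¹ • c n) atTop (nhds 0) := by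
    have hgt : Tendsto (fun n => ‖D - Dn n‖) atTop (nhds (0 : ℝ)) := by
      have h : Tendsto (fun n => D - Dn n) atTop (nhds (D - D)) :=
        tendsto_const_nhds.sub hDconv
      rw [sub_self] at h
      simpa using h.norm
    refine squeeze_zero_norm (fun n => ?_) hgt
    · rw [hdiff n, norm_smul]
      have h1 : ‖((lam n / l : ℝ) : ℂ)‖ ≤ 1 := by
        rw [Complex.norm_real, Real.norm_eq_abs,
          abs_of_nonneg (div_nonneg (hpos n).le hlpos.le)]
        exact div_le_one_of_le₀ (hle n) hlpos.le
      calc ‖((lam n / l : ℝ) : ℂ)‖ * ‖(D - Dn n) (y n)‖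
          ≤ 1 * (‖D - Dn n‖ * ‖y n‖) :=
            mul_le_mul h1 (le_opNorm _ _) (norm_nonneg _) zero_le_one
        _ = ‖D - Dn n‖ * ‖y n‖ := one_mul _
        _ ≤ ‖D - Dn n‖ * 1 :=
            mul_le_mul_of_nonneg_left (hy n) (norm_nonneg _)
        _ = ‖D - Dn n‖ := mul_one _
  have hDu : Tendsto (fun n => D (u n)) atTop (nhds (((l : ℝ) : ℂ)⁻¹ • w)) := by
    have h2 : Tendsto (fun n => ((l : ℝ) : ℂ)⁻¹ • c n) atTop
        (nhds (((l : ℝ) : ℂ)⁻¹ • w)) := hc.const_smul _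
    have := herr.add h2
    simpa using this
  obtain ⟨v, hv1, hv2⟩ := ballLimit D hclosed u hun _ hDu
  refine ⟨v, hv1, ?_⟩
  rw [hv2, smul_inv_smul₀ hlne]

end AuxLemmas

variable {H K : Type*} [NormedAddCommGroup H] [InnerProductSpace ℂ H] [CompleteSpace H]
  [NormedAddCommGroup K] [InnerProductSpace ℂ K] [CompleteSpace K]

/-- The (1,1)-block `A = P_N T P_M : M → N` of `T` relative to `H = M ⊕ M⊥`, `K = N ⊕ N⊥`. -/
noncomputable def blkA (M : Submodule ℂ H) (N : Submodule ℂ K) [CompleteSpace M]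
    [CompleteSpace N] (T : H →L[ℂ] K) : M →L[ℂ] N :=
  (Submodule.orthogonalProjection N).comp (T.comp (Submodule.subtypeL M))

/-- The (1,2)-block `B = P_N T P_{M⊥} : M⊥ → N`. -/
noncomputable def blkB (M : Submodule ℂ H) (N : Submodule ℂ K) [CompleteSpace M]
    [CompleteSpace N] (T : H →L[ℂ] K) : Mᗮ →L[ℂ] N :=
  (Submodule.orthogonalProjection N).comp (T.comp (Submodule.subtypeL Mᗮ))

/-- The (2,1)-block `C = P_{N⊥} T P_M : M → N⊥`. -/
noncomputable def blkC (M : Submodule ℂ H) (N : Submodule ℂ K) [CompleteSpace M]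
    [CompleteSpace N] (T : H →L[ℂ] K) : M →L[ℂ] Nᗮ :=
  (Submodule.orthogonalProjection Nᗮ).comp (T.comp (Submodule.subtypeL M))

/-- The (2,2)-block `D = P_{N⊥} T P_{M⊥} : M⊥ → N⊥`. -/
noncomputable def blkD (M : Submodule ℂ H) (N : Submodule ℂ K) [CompleteSpace M]
    [CompleteSpace N] (T : H →L[ℂ] K) : Mᗮ →L[ℂ] Nᗮ :=
  (Submodule.orthogonalProjection Nᗮ).comp (T.comp (Submodule.subtypeL Mᗮ))

/-- If each `T_n` is `(M,N,λ_n)`-complementable, `T_n → T` in operator norm, `R(D)` is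
closed and `(λ_n)` is bounded with supremum `λ`, then `T` is `(M,N,λ)`-complementable. -/
theorem stmt15 (M : Submodule ℂ H) (N : Submodule ℂ K) [CompleteSpace M] [CompleteSpace N]
    (Tn : ℕ → H →L[ℂ] K) (T : H →L[ℂ] K)
    (hconv : Filter.Tendsto Tn Filter.atTop (nhds T))
    (lam : ℕ → ℝ) (hpos : ∀ n, 0 < lam n) (hbdd : BddAbove (Set.range lam))
    (hcompl : ∀ n, ∀ x : M, ‖x‖ ≤ 1 → ∃ y : Mᗮ, ‖y‖ ≤ 1 ∧
      blkC M N (Tn n) x = ((lam n : ℝ) : ℂ) • blkD M N (Tn n) y)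
    (hcompl' : ∀ n, ∀ x : N, ‖x‖ ≤ 1 → ∃ y : Nᗮ, ‖y‖ ≤ 1 ∧
      adjoint (blkB M N (Tn n)) x = ((lam n : ℝ) : ℂ) • adjoint (blkD M N (Tn n)) y)
    (hclosed : IsClosed (Set.range (blkD M N T))) :
    (∀ x : M, ‖x‖ ≤ 1 → ∃ y : Mᗮ, ‖y‖ ≤ 1 ∧
        blkC M N T x = ((sSup (Set.range lam) : ℝ) : ℂ) • blkD M N T y) ∧
      (∀ x : N, ‖x‖ ≤ 1 → ∃ y : Nᗮ, ‖y‖ ≤ 1 ∧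
        adjoint (blkB M N T) x =
          ((sSup (Set.range lam) : ℝ) : ℂ) • adjoint (blkD M N T) y) := by
  have hDt : Tendsto (fun n => blkD M N (Tn n)) atTop (nhds (blkD M N T)) := by
    unfold blkD
    exact tendsto_blk _ _ hconv
  constructor
  · intro x hx
    choose y hy1 hy2 using fun n => hcompl n x hx
    have hCt : Tendsto (fun n => blkC M N (Tn n)) atTop (nhds (blkC M N T)) := by
      unfold blkC
      exact tendsto_blk _ _ hconv
    have hCx : Tendsto (fun n => blkC M N (Tn n) x) atTop (nhds (blkC M N T x)) :=
      tendsto_clm_apply hCt x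
    obtain ⟨v, hv1, hv2⟩ := keyLemma (blkD M N T) hclosed (fun n => blkD M N (Tn n)) hDt
      lam hpos hbdd (fun n => blkC M N (Tn n) x) (blkC M N T x) hCx y hy1 hy2
    exact ⟨v, hv1, hv2⟩
  · intro x hx
    choose y hy1 hy2 using fun n => hcompl' n x hx
    have hclosed' : IsClosed (Set.range (adjoint (blkD M N T))) :=
      adjointRangeClosed _ hclosed
    have hadjD : Continuous fun S : Mᗮ →L[ℂ] Nᗮ => adjoint S :=
      (ContinuousLinearMap.adjoint : (Mᗮ →L[ℂ] Nᗮ) ≃ₗᵢ⋆[ℂ] _).continuous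
    have hDt' : Tendsto (fun n => adjoint (blkD M N (Tn n))) atTop
        (nhds (adjoint (blkD M N T))) :=
      (hadjD.tendsto _).comp hDt
    have hBt : Tendsto (fun n => blkB M N (Tn n)) atTop (nhds (blkB M N T)) := by
      unfold blkB
      exact tendsto_blk _ _ hconv
    have hadjB : Continuous fun S : Mᗮ →L[ℂ] N => adjoint S :=
      (ContinuousLinearMap.adjoint : (Mᗮ →L[ℂ] N) ≃ₗᵢ⋆[ℂ] _).continuous
    have hBt' : Tendsto (fun n => adjoint (blkB M N (Tn n))) atTop
        (nhds (adjoint (blkB M N T))) :=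
      (hadjB.tendsto _).comp hBt
    have hBx : Tendsto (fun n => adjoint (blkB M N (Tn n)) x) atTop
        (nhds (adjoint (blkB M N T) x)) :=
      tendsto_clm_apply hBt' x
    obtain ⟨v, hv1, hv2⟩ := keyLemma (adjoint (blkD M N T)) hclosed'
      (fun n => adjoint (blkD M N (Tn n))) hDt' lam hpos hbdd
      (fun n => adjoint (blkB M N (Tn n)) x) (adjoint (blkB M N T) x) hBx y hy1 hy2
    exact ⟨v, hv1, hv2⟩
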